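/- Let n ≥ 4 (and char k = 0 or n ≤ char k, char k odd) and equip Sym^n(V)* with the unique (up to scalar) sl_2-equivariant symmetric bracket [ , ] : Sym^n(V)* × Sym^n(V)* → sl_2 with structure constants [s_i*, s_{n−i}*] = a_i H, [s_j*, s_{n−1−j}*] = b_j E_{12}, [s_k*, s_{n+1−k}*] = c_k E_{21}, where b_j = (−1)^j C(n−1,j) a. Then for v = α s_0* + β s_{n−1}* with α, β ≠ 0, one has [[v,v],v] = [2aαβ E_{12}, v] = −4aαβ² s_{n−2}* ≠ 0 (for a ≠ 0). Hence the odd Jacobi identity [[v,v],v] = 0 fails. -/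

import Mathlib

/-!
STATEMENT 10: Let `n ≥ 4` (with `char k = 0` or `n ≤ char k`, `char k` odd) and
equip `Sym^n(V)*` (basis `s₀*, …, s_n*`) with the `sl₂`-equivariant symmetric
bracket into `sl₂` with structure constants
`[s_i*, s_{n-i}*] = a_i H`, `[s_j*, s_{n-1-j}*] = b_j E₁₂`,
`[s_k*, s_{n+1-k}*] = c_k E₂₁`, where
`a_i = ((-1)^i/2)(C(n-1,i) - C(n-1,i-1)) a`, `b_j = (-1)^j C(n-1,j) a`,
`c_k = (-1)^k C(n-1,k-1) a`, and `[s_i*, s_{i'}*] = 0` when `i+i' ∉ {n, n±1}`.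
Then for `v = α s₀* + β s_{n-1}*` with `α, β ≠ 0` and `a ≠ 0`:
`[v,v] = 2aαβ E₁₂` and `[[v,v],v] = -4aαβ² s_{n-2}* ≠ 0`; hence the odd Jacobi
identity fails.

`Sym^n(V)*` is modelled by coordinates in the basis `(s_i*)`; `sl₂` acts by
`H·s_i* = (n-2i) s_i*`, `E₁₂·s_i* = -(n-i+1) s_{i-1}*`, `E₂₁·s_i* = -(i+1) s_{i+1}*`.
-/

namespace Stmt10

variable (k : Type*) [Field k] (n : ℕ)

def E12 : Matrix (Fin 2) (Fin 2) k := Matrix.single 0 1 1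
def E21 : Matrix (Fin 2) (Fin 2) k := Matrix.single 1 0 1
def H : Matrix (Fin 2) (Fin 2) k := Matrix.diagonal ![1, -1]

/-- The basis vector `s_i*` of `Sym^n(V)*`. -/
def s (i : Fin (n + 1)) : Fin (n + 1) → k := Pi.single i 1

/-- Action of `H` on `Sym^n(V)*`: `H·s_i* = (n-2i) s_i*`. -/
def Hact (v : Fin (n + 1) → k) : Fin (n + 1) → k :=
  fun i => ((n : k) - 2 * ((i : ℕ) : k)) * v i

/-- Action of `E₁₂` on `Sym^n(V)*`: `E₁₂·s_i* = -(n-i+1) s_{i-1}*`. -/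
def E12act (v : Fin (n + 1) → k) : Fin (n + 1) → k :=
  fun i => if h : (i : ℕ) + 1 ≤ n then
      -(((n - (i : ℕ) : ℕ)) : k) * v ⟨(i : ℕ) + 1, by omega⟩
    else 0

/-- Action of `E₂₁` on `Sym^n(V)*`: `E₂₁·s_i* = -(i+1) s_{i+1}*`. -/
def E21act (v : Fin (n + 1) → k) : Fin (n + 1) → k :=
  fun i => if h : 1 ≤ (i : ℕ) then
      -(((i : ℕ)) : k) * v ⟨(i : ℕ) - 1, by omega⟩
    else 0

/-- The action of a (trace-zero) `2 × 2` matrix `X = X₀₀ H + X₀₁ E₁₂ + X₁₀ E₂₁`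
on `Sym^n(V)*`. -/
def act (X : Matrix (Fin 2) (Fin 2) k) (v : Fin (n + 1) → k) : Fin (n + 1) → k :=
  X 0 0 • Hact k n v + X 0 1 • E12act k n v + X 1 0 • E21act k n v

/-- The structure constants `a_i`. -/
def aC (a : k) (i : ℕ) : k :=
  ((-1 : k) ^ i / 2) *
    (((n - 1).choose i : k) - (if i = 0 then 0 else ((n - 1).choose (i - 1) : k))) * a

/-- The structure constants `b_j`. -/
def bC (a : k) (j : ℕ) : k := (-1 : k) ^ j * ((n - 1).choose j : k) * a

/-- The structure constants `c_k`. -/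
def cC (a : k) (j : ℕ) : k := (-1 : k) ^ j * ((n - 1).choose (j - 1) : k) * a

end Stmt10

/-! The brackets `[s₀*, s₀*]` and `[s_{n-1}*, s_{n-1}*]` vanish (index sums `0` and `2n-2`
avoid `n, n ± 1` because `n ≥ 4`), so bilinearity and symmetry leave only the cross term:
`[v,v] = 2αβ b₀ E₁₂ = 2aαβ E₁₂`. Then `E₁₂` kills `s₀*` and sends `s_{n-1}*` to
`-2 s_{n-2}*`, and `-4aαβ² ≠ 0` because `char k ≠ 2`. -/

namespace Stmt10

section SymmetricBracket

variable {R M N : Type*} [CommSemiring R] [AddCommMonoid M] [Module R M]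
  [AddCommMonoid N] [Module R N] (br : M → M → N)
  (hadd : ∀ x x' y, br (x + x') y = br x y + br x' y)
  (hsmul : ∀ (c : R) x y, br (c • x) y = c • br x y)
  (hsym : ∀ x y, br x y = br y x)

include hadd hsym in
lemma map_add_right_of_symm (x y y' : M) : br x (y + y') = br x y + br x y' := by
  rw [hsym, hadd, hsym y, hsym y']

include hsmul hsym in
lemma map_smul_right_of_symm (c : R) (x y : M) : br x (c • y) = c • br x y := by
  rw [hsym, hsmul, hsym y]

include hadd hsmul hsym in
lemma map_smul_add_smul_self_of_isotropic {x y : M} (hx : br x x = 0) (hy : br y y = 0)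
    (α β : R) : br (α • x + β • y) (α • x + β • y) = (2 * α * β) • br x y := by
  have hadd' := map_add_right_of_symm br hadd hsym
  have hsmul' := map_smul_right_of_symm br hsmul hsym
  simp only [hadd, hadd', hsmul, hsmul', hx, hy, smul_zero, zero_add, add_zero, smul_smul]
  rw [hsym y x, ← add_smul]
  congr 1
  ring

end SymmetricBracket

variable {k : Type*} [Field k] {n : ℕ}

lemma s_ne_zero (i : Fin (n + 1)) : s k n i ≠ 0 :=
  Pi.single_ne_zero_iff.mpr one_ne_zero

lemma act_smul_E12 (c : k) (v : Fin (n + 1) → k) :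
    act k n (c • E12 k) v = c • E12act k n v := by
  simp [act, E12]

lemma E12act_add (x y : Fin (n + 1) → k) :
    E12act k n (x + y) = E12act k n x + E12act k n y := by
  funext i; simp only [E12act, Pi.add_apply]; split_ifs <;> ring

lemma E12act_smul (c : k) (x : Fin (n + 1) → k) : E12act k n (c • x) = c • E12act k n x := by
  funext i; simp only [E12act, Pi.smul_apply, smul_eq_mul]; split_ifs <;> ring

lemma E12act_s_of_val_eq_zero {j : Fin (n + 1)} (hj : (j : ℕ) = 0) :
    E12act k n (s k n j) = 0 := by
  funext i
  simp only [E12act, s, Pi.zero_apply]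
  split_ifs
  · rw [Pi.single_eq_of_ne (Fin.ne_of_val_ne (by simp only; omega)), mul_zero]
  · rfl

lemma E12act_s_of_val_eq_succ {i j : Fin (n + 1)} (hj : (j : ℕ) = i + 1) :
    E12act k n (s k n j) = (-((n - i : ℕ) : k)) • s k n i := by
  funext l
  simp only [E12act, s, Pi.smul_apply, smul_eq_mul, Pi.single_apply, Fin.ext_iff]
  split_ifs <;> simp_all

end Stmt10

open Stmt10 in
theorem stmt10 (k : Type*) [Field k] (hk2 : ringChar k ≠ 2)
    (n : ℕ) (hn : 4 ≤ n)
    (a : k) (ha : a ≠ 0) (α β : k) (hα : α ≠ 0) (hβ : β ≠ 0)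
    (br : (Fin (n + 1) → k) → (Fin (n + 1) → k) → Matrix (Fin 2) (Fin 2) k)
    -- `br` is bilinear and symmetric
    (hadd₁ : ∀ x x' y, br (x + x') y = br x y + br x' y)
    (hsmul₁ : ∀ (c : k) x y, br (c • x) y = c • br x y)
    (hsym : ∀ x y, br x y = br y x)
    -- structure constants
    (hE12 : ∀ j : Fin (n + 1), (j : ℕ) ≤ n - 1 →
      br (s k n j) (s k n ⟨n - 1 - (j : ℕ), by omega⟩) = bC k n a (j : ℕ) • E12 k)
    (hzero : ∀ i i' : Fin (n + 1),
      (i : ℕ) + (i' : ℕ) ≠ n → (i : ℕ) + (i' : ℕ) ≠ n - 1 →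
      (i : ℕ) + (i' : ℕ) ≠ n + 1 → br (s k n i) (s k n i') = 0) :
    ∀ v : Fin (n + 1) → k,
      v = α • s k n ⟨0, by omega⟩ + β • s k n ⟨n - 1, by omega⟩ →
        br v v = (2 * a * α * β) • E12 k ∧
        act k n (br v v) v = (-(4 * a * α * β ^ 2)) • s k n ⟨n - 2, by omega⟩ ∧
        act k n (br v v) v ≠ 0 := by
  intro v hv
  set i₀ : Fin (n + 1) := ⟨0, by omega⟩
  set i₁ : Fin (n + 1) := ⟨n - 1, by omega⟩
  set i₂ : Fin (n + 1) := ⟨n - 2, by omega⟩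
  have h₀₀ : br (s k n i₀) (s k n i₀) = 0 := by
    apply hzero <;> simp only [i₀] <;> omega
  have h₁₁ : br (s k n i₁) (s k n i₁) = 0 := by
    apply hzero <;> simp only [i₁] <;> omega
  have h₀₁ : br (s k n i₀) (s k n i₁) = a • E12 k := by
    simpa [bC, i₀] using hE12 i₀ (Nat.zero_le _)
  have hbr : br v v = (2 * a * α * β) • E12 k := by
    rw [hv, map_smul_add_smul_self_of_isotropic br hadd₁ hsmul₁ hsym h₀₀ h₁₁, h₀₁,
      smul_smul]
    ring_nf
  have hact : act k n (br v v) v = (-(4 * a * α * β ^ 2)) • s k n i₂ := by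
    rw [hbr, act_smul_E12, hv, E12act_add, E12act_smul, E12act_smul,
      E12act_s_of_val_eq_zero rfl,
      E12act_s_of_val_eq_succ (i := i₂) (by simp only [i₁, i₂]; omega),
      show n - (n - 2) = 2 by omega, smul_zero, zero_add, smul_smul, smul_smul]
    congr 1
    push_cast
    ring
  refine ⟨hbr, hact, hact ▸ smul_ne_zero ?_ (s_ne_zero i₂)⟩
  have h₂ : (2 : k) ≠ 0 := Ring.two_ne_zero hk2
  have h₄ : (4 : k) ≠ 0 := by
    rw [show (4 : k) = 2 * 2 by norm_num]
    exact mul_ne_zero h₂ h₂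
  exact neg_ne_zero.mpr (mul_ne_zero (mul_ne_zero (mul_ne_zero h₄ ha) hα) (pow_ne_zero 2 hβ))
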